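/- lim_{N→∞} 120 · p_4(N, 5) / C(N-1, 4) = 15/88, where p_4(N, 5) is the number of 5-tuples (a_1,…,a_5) of positive integers with a_1 ≥ ⋯ ≥ a_5, sum N, a_1 ≥ a_2 + a_3 + a_4 and a_2 ≥ a_3 + a_4 + a_5. -/

import Mathlib

/-! Setting `v = (a₁ - a₂ - a₃ - a₄, a₂ - a₃, a₃ - a₄, a₄ - 1)` identifies the partitions being
counted with the lattice points of `2 v₀ + 4 v₁ + 8 v₂ + 11 v₃ ≤ N - 11`, the slack being
`a₀ - a₁ - a₂ - a₃`. Dividing each coordinate `wᵢ` of a point of `ℕ⁴` by the weight `cᵢ` with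
remainder shows that `2 · 4 · 8 · 11 = 704` times this number lies between the numbers of lattice
points of the standard simplices `∑ wᵢ ≤ N - 11` and `∑ wᵢ ≤ N + 10`, that is between
`C(N - 7, 4)` and `C(N + 14, 4)`. Both are asymptotic to `C(N - 1, 4)`, and `120 / 704 = 15 / 88`.
-/

open Filter Asymptotics Topology

section LatticeCount

variable {ι : Type*} [Fintype ι]

def weightedSimplex (c : ι → ℕ) (M : ℕ) : Set (ι → ℕ) := {v | ∑ i, c i * v i ≤ M}

def sumLeEquivSumEq (M : ℕ) :
    {v : ι → ℕ // ∑ i, v i ≤ M} ≃ {x : Option ι → ℕ // ∑ o, x o = M} where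
  toFun v := ⟨fun o => o.elim (M - ∑ i, v.1 i) v.1, by
    simp only [Fintype.sum_option, Option.elim_none, Option.elim_some]
    exact Nat.sub_add_cancel v.2⟩
  invFun x := ⟨fun i => x.1 (some i), by
    have hx := x.2
    rw [Fintype.sum_option] at hx
    exact le_add_self.trans_eq hx⟩
  left_inv v := rfl
  right_inv x := by
    obtain ⟨x, hx⟩ := x
    ext (_ | i)
    · rw [Fintype.sum_option] at hx
      simp only [Option.elim_none]
      omega
    · rfl

theorem ncard_weightedSimplex_one (M : ℕ) :
    (weightedSimplex (1 : ι → ℕ) M).ncard = (M + Fintype.card ι).choose (Fintype.card ι) := by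
  classical
  have e : weightedSimplex (1 : ι → ℕ) M ≃ Sym (Option ι) M :=
    (Equiv.subtypeEquivRight fun v => by simp [weightedSimplex]).trans
      ((sumLeEquivSumEq M).trans (Sym.equivNatSumOfFintype _ M).symm)
  rw [← Nat.card_coe_set_eq, Nat.card_congr e, Sym.natCard_sym_eq_choose,
    Nat.card_eq_fintype_card, Fintype.card_option, Nat.add_right_comm, Nat.add_sub_cancel,
    ← Nat.choose_symm_add, add_comm M]

theorem weightedSimplex_one_finite (M : ℕ) : (weightedSimplex (1 : ι → ℕ) M).Finite :=
  Set.finite_of_ncard_pos <| by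
    rw [ncard_weightedSimplex_one]
    exact Nat.choose_pos (Nat.le_add_left _ _)

theorem ncard_preimage_div_weightedSimplex {c : ι → ℕ} (hc : ∀ i, c i ≠ 0) (M : ℕ) :
    ((fun (w : ι → ℕ) i => w i / c i) ⁻¹' weightedSimplex c M).ncard =
      (∏ i, c i) * (weightedSimplex c M).ncard := by
  have := fun i => NeZero.mk (hc i)
  let e : (ι → ℕ) ≃ (ι → ℕ) × ((i : ι) → Fin (c i)) :=
    (Equiv.piCongrRight fun i => Nat.divModEquiv (c i)).trans
      (Equiv.arrowProdEquivProdArrow _ _ _)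
  have : (fun (w : ι → ℕ) i => w i / c i) ⁻¹' weightedSimplex c M =
      e ⁻¹' (weightedSimplex c M ×ˢ Set.univ) := by
    ext w
    simp [e]
  rw [this, ← e.image_symm_eq_preimage, Set.ncard_image_of_injective _ e.symm.injective,
    Set.ncard_prod, Set.ncard_univ, Nat.card_pi]
  simp [mul_comm]

theorem weightedSimplex_one_subset_preimage_div (c : ι → ℕ) (M : ℕ) :
    weightedSimplex (1 : ι → ℕ) M ⊆ (fun (w : ι → ℕ) i => w i / c i) ⁻¹' weightedSimplex c M :=
  fun w hw => (Finset.sum_le_sum fun i _ => Nat.mul_div_le (w i) (c i)).trans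
    (by simpa [weightedSimplex] using hw)

theorem preimage_div_weightedSimplex_subset {c : ι → ℕ} (hc : ∀ i, c i ≠ 0) (M : ℕ) :
    (fun (w : ι → ℕ) i => w i / c i) ⁻¹' weightedSimplex c M ⊆
      weightedSimplex (1 : ι → ℕ) (M + ∑ i, (c i - 1)) := by
  intro w hw
  have hblock : ∀ i, w i ≤ c i * (w i / c i) + (c i - 1) := fun i => by
    have := Nat.div_add_mod (w i) (c i)
    have := Nat.mod_lt (w i) (Nat.pos_of_ne_zero (hc i))
    omega
  calc ∑ i, 1 * w i ≤ ∑ i, (c i * (w i / c i) + (c i - 1)) :=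
        Finset.sum_le_sum fun i _ => (one_mul (w i)).trans_le (hblock i)
    _ ≤ M + ∑ i, (c i - 1) := by
        rw [Finset.sum_add_distrib]
        exact Nat.add_le_add_right hw _

theorem ncard_weightedSimplex_one_le {c : ι → ℕ} (hc : ∀ i, c i ≠ 0) (M : ℕ) :
    (weightedSimplex (1 : ι → ℕ) M).ncard ≤ (∏ i, c i) * (weightedSimplex c M).ncard := by
  rw [← ncard_preimage_div_weightedSimplex hc]
  exact Set.ncard_le_ncard (weightedSimplex_one_subset_preimage_div c M)
    ((weightedSimplex_one_finite _).subset (preimage_div_weightedSimplex_subset hc M))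

theorem mul_ncard_weightedSimplex_le {c : ι → ℕ} (hc : ∀ i, c i ≠ 0) (M : ℕ) :
    (∏ i, c i) * (weightedSimplex c M).ncard ≤
      (weightedSimplex (1 : ι → ℕ) (M + ∑ i, (c i - 1))).ncard := by
  rw [← ncard_preimage_div_weightedSimplex hc]
  exact Set.ncard_le_ncard (preimage_div_weightedSimplex_subset hc M) (weightedSimplex_one_finite _)

end LatticeCount

def nonQuadrilateralPartitions (N : ℕ) : Set (Fin 5 → ℕ) :=
  {a | (∀ i, 1 ≤ a i) ∧ (∀ i j : Fin 5, i ≤ j → a j ≤ a i) ∧ (∑ i, a i) = N ∧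
    a 1 + a 2 + a 3 ≤ a 0 ∧ a 2 + a 3 + a 4 ≤ a 1}

theorem mem_nonQuadrilateralPartitions_iff {N : ℕ} {a : Fin 5 → ℕ} :
    a ∈ nonQuadrilateralPartitions N ↔
      1 ≤ a 4 ∧ a 4 ≤ a 3 ∧ a 3 ≤ a 2 ∧ a 0 + a 1 + a 2 + a 3 + a 4 = N ∧
        a 1 + a 2 + a 3 ≤ a 0 ∧ a 2 + a 3 + a 4 ≤ a 1 := by
  rw [nonQuadrilateralPartitions, Set.mem_ofPred_eq, ← Fin.sum_univ_five]
  constructor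
  · rintro ⟨hpos, hanti, hsum, h0, h1⟩
    exact ⟨hpos 4, hanti 3 4 (by decide), hanti 2 3 (by decide), hsum, h0, h1⟩
  · rintro ⟨h4, h43, h32, hsum, h0, h1⟩
    refine ⟨fun i => ?_, Fin.antitone_iff_succ_le.2 fun i => ?_, hsum, h0, h1⟩ <;>
      fin_cases i <;> dsimp <;> omega

def gaps (a : Fin 5 → ℕ) : Fin 4 → ℕ := ![a 1 - (a 2 + a 3 + a 4), a 2 - a 3, a 3 - a 4, a 4 - 1]

def ofGaps (N : ℕ) (v : Fin 4 → ℕ) : Fin 5 → ℕ :=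
  let s := N - 11 - (2 * v 0 + 4 * v 1 + 8 * v 2 + 11 * v 3)
  ![5 * v 3 + 4 * v 2 + 2 * v 1 + v 0 + s + 5, 3 * v 3 + 2 * v 2 + v 1 + v 0 + 3,
    v 3 + v 2 + v 1 + 1, v 3 + v 2 + 1, v 3 + 1]

theorem mem_weightedSimplex_2_4_8_11 {M : ℕ} {v : Fin 4 → ℕ} :
    v ∈ weightedSimplex ![2, 4, 8, 11] M ↔ 2 * v 0 + 4 * v 1 + 8 * v 2 + 11 * v 3 ≤ M := by
  simp [weightedSimplex, Fin.sum_univ_four]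

theorem gaps_ofGaps (N : ℕ) (v : Fin 4 → ℕ) : gaps (ofGaps N v) = v := by
  ext i; fin_cases i <;> simp [gaps, ofGaps]; omega

theorem ofGaps_gaps {N : ℕ} {a : Fin 5 → ℕ} (ha : a ∈ nonQuadrilateralPartitions N) :
    ofGaps N (gaps a) = a := by
  rw [mem_nonQuadrilateralPartitions_iff] at ha
  ext i; fin_cases i <;> simp [gaps, ofGaps] <;> omega

theorem mapsTo_gaps (N : ℕ) :
    Set.MapsTo gaps (nonQuadrilateralPartitions N) (weightedSimplex ![2, 4, 8, 11] (N - 11)) := by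
  intro a ha
  rw [mem_nonQuadrilateralPartitions_iff] at ha
  rw [mem_weightedSimplex_2_4_8_11]
  simp [gaps]
  omega

theorem mapsTo_ofGaps {N : ℕ} (hN : 11 ≤ N) :
    Set.MapsTo (ofGaps N) (weightedSimplex ![2, 4, 8, 11] (N - 11))
      (nonQuadrilateralPartitions N) := by
  intro v hv
  rw [mem_weightedSimplex_2_4_8_11] at hv
  rw [mem_nonQuadrilateralPartitions_iff]
  simp [ofGaps]
  omega

theorem ncard_nonQuadrilateralPartitions {N : ℕ} (hN : 11 ≤ N) :
    (nonQuadrilateralPartitions N).ncard = (weightedSimplex ![2, 4, 8, 11] (N - 11)).ncard :=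
  (Set.InvOn.bijOn ⟨fun _ => ofGaps_gaps, fun v _ => gaps_ofGaps N v⟩
    (mapsTo_gaps N) (mapsTo_ofGaps hN)).ncard_eq

theorem isEquivalent_natCast_add_sub (i j : ℕ) :
    (fun n : ℕ => ((n + i - j : ℕ) : ℝ)) ~[atTop] fun n => (n : ℝ) := by
  have hshift : (fun n : ℕ => (n : ℝ) + ((i : ℝ) - j)) ~[atTop] fun n => (n : ℝ) :=
    IsEquivalent.refl.add_const_of_norm_tendsto_atTop
      (tendsto_norm_atTop_atTop.comp tendsto_natCast_atTop_atTop)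
  refine hshift.congr_left ?_
  filter_upwards [eventually_ge_atTop j] with n hn
  push_cast [Nat.cast_sub (by omega : j ≤ n + i)]
  ring

theorem isEquivalent_choose_of_isEquivalent {u v : ℕ → ℕ}
    (huv : (fun n => (u n : ℝ)) ~[atTop] fun n => (v n : ℝ)) (hv : Tendsto v atTop atTop)
    (k : ℕ) : (fun n => ((u n).choose k : ℝ)) ~[atTop] fun n => ((v n).choose k : ℝ) := by
  have hu : Tendsto u atTop atTop := tendsto_natCast_atTop_iff.1 <|
    huv.symm.tendsto_atTop (tendsto_natCast_atTop_atTop.comp hv)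
  exact ((isEquivalent_choose k).comp_tendsto hu).trans
    (((huv.pow k).div IsEquivalent.refl).trans ((isEquivalent_choose k).comp_tendsto hv).symm)

theorem tendsto_choose_add_sub_div_choose_add_sub (i j i' j' k : ℕ) :
    Tendsto (fun n : ℕ => ((n + i - j).choose k : ℝ) / ((n + i' - j').choose k : ℝ))
      atTop (𝓝 1) := by
  have hv : Tendsto (fun n : ℕ => n + i' - j') atTop atTop :=
    tendsto_atTop_mono (fun n => by omega) (tendsto_sub_atTop_nat j')
  have hequiv := isEquivalent_choose_of_isEquivalent ((isEquivalent_natCast_add_sub i j).trans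
    (isEquivalent_natCast_add_sub i' j').symm) hv k
  refine (isEquivalent_iff_tendsto_one ?_).1 hequiv
  filter_upwards [eventually_ge_atTop (j' + k)] with n hn
  exact_mod_cast (Nat.choose_pos (by omega)).ne'

theorem choose_le_mul_ncard_nonQuadrilateralPartitions {N : ℕ} (hN : 11 ≤ N) :
    (N - 7).choose 4 ≤ 704 * (nonQuadrilateralPartitions N).ncard ∧
      704 * (nonQuadrilateralPartitions N).ncard ≤ (N + 14).choose 4 := by
  have hc : ∀ i, ![2, 4, 8, 11] i ≠ 0 := by decide
  have hprod : ∏ i, ![2, 4, 8, 11] i = 704 := by decide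
  have hsum : ∑ i, (![2, 4, 8, 11] i - 1) = 21 := by decide
  have hlow := ncard_weightedSimplex_one_le hc (N - 11)
  have hup := mul_ncard_weightedSimplex_le hc (N - 11)
  rw [ncard_weightedSimplex_one, Fintype.card_fin, hprod] at hlow hup
  rw [hsum] at hup
  rw [ncard_nonQuadrilateralPartitions hN, show N - 7 = N - 11 + 4 by omega,
    show N + 14 = N - 11 + 21 + 4 by omega]
  exact ⟨hlow, hup⟩

theorem prob_no_quadrilateral_five_pieces :
    Filter.Tendsto (fun N : ℕ =>
      (120 : ℝ) * (Set.ncard {a : Fin 5 → ℕ | (∀ i, 1 ≤ a i) ∧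
          (∀ i j : Fin 5, i ≤ j → a j ≤ a i) ∧ (∑ i, a i) = N ∧
          a 1 + a 2 + a 3 ≤ a 0 ∧ a 2 + a 3 + a 4 ≤ a 1} : ℕ) /
        (Nat.choose (N - 1) 4 : ℝ))
      Filter.atTop (nhds (15 / 88)) := by
  have hlow := (tendsto_choose_add_sub_div_choose_add_sub 0 7 0 1 4).const_mul (15 / 88 : ℝ)
  have hup := (tendsto_choose_add_sub_div_choose_add_sub 14 0 0 1 4).const_mul (15 / 88 : ℝ)
  simp only [add_zero, Nat.sub_zero, mul_one] at hlow hup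
  have hscale (x C : ℝ) : 120 * x / C = 15 / 88 * (704 * x / C) := by ring
  refine tendsto_of_tendsto_of_tendsto_of_le_of_le' hlow hup ?_ ?_ <;>
    filter_upwards [eventually_ge_atTop 11] with N hN <;>
    rw [← nonQuadrilateralPartitions, hscale] <;>
    gcongr
  · exact_mod_cast (choose_le_mul_ncard_nonQuadrilateralPartitions hN).1
  · exact_mod_cast (choose_le_mul_ncard_nonQuadrilateralPartitions hN).2
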